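/- arXiv:2504.14885 — 3 statements merged into one kernel-verified Lean document; each statement's English description precedes it below -/
import Mathlib

section
/- Let F be a conjugate super-symmetric 4th order tensor associated to a convex real-valued complex quartic function f̃: ℂ^n → ℝ, so that f̃(x) = F((x;x*),(x;x*),(x;x*),(x;x*)). Then for any x¹, x², x³, x⁴ ∈ ℂ^n, max{f̃(x¹), f̃(x²), f̃(x³), f̃(x⁴)} ≥ F((x¹;x¹*),(x²;x²*),(x³;x³*),(x⁴;x⁴*)). -/
open scoped BigOperators

/-- The multilinear form associated with a 4th order tensor
`F : (Fin 4 → I) → ℂ` on index set `I = Fin n ⊕ Fin n`. -/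
noncomputable def tensorForm (n : ℕ) (F : (Fin 4 → (Fin n ⊕ Fin n)) → ℂ)
    (u : Fin 4 → (Fin n ⊕ Fin n) → ℂ) : ℂ :=
  ∑ v : Fin 4 → (Fin n ⊕ Fin n), F v * ∏ k : Fin 4, u k (v k)

/-- Augmentation `x ↦ (x; x*)` of a complex vector. -/
def aug (n : ℕ) (x : Fin n → ℂ) : (Fin n ⊕ Fin n) → ℂ :=
  Sum.elim x (star x)

namespace Stmt4Aux

variable (n : ℕ) (F : (Fin 4 → (Fin n ⊕ Fin n)) → ℂ)

lemma aug_add (x y : Fin n → ℂ) : ∀ i, aug n (x + y) i = aug n x i + aug n y i := by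
  intro i; cases i <;> simp [aug]

lemma aug_neg (x : Fin n → ℂ) : ∀ i, aug n (-x) i = - aug n x i := by
  intro i; cases i <;> simp [aug]

lemma aug_smul (t : ℝ) (x : Fin n → ℂ) : ∀ i, aug n (t • x) i = (t : ℂ) * aug n x i := by
  intro i; cases i <;>
    simp [aug, Pi.smul_apply, Pi.star_apply, star_smul, Complex.real_smul]

lemma aug_conj (x : Fin n → ℂ) :
    ∀ i, (starRingEnd ℂ) (aug n x i) = aug n x i.swap := by
  intro i; cases i <;> simp [aug]

/-- The quadrilinear form on `ℂ^n` (real-multilinear). -/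
noncomputable def A (a b c d : Fin n → ℂ) : ℂ :=
  tensorForm n F (fun p => aug n (![a, b, c, d] p))

lemma A_apply (a b c d : Fin n → ℂ) :
    A n F a b c d = ∑ v : Fin 4 → (Fin n ⊕ Fin n),
      F v * (aug n a (v 0) * aug n b (v 1) * aug n c (v 2) * aug n d (v 3)) := by
  simp [A, tensorForm, Fin.prod_univ_four]

lemma A_add1 (a a' b c d : Fin n → ℂ) :
    A n F (a + a') b c d = A n F a b c d + A n F a' b c d := by
  simp only [A_apply, ← Finset.sum_add_distrib]
  refine Finset.sum_congr rfl fun v _ => ?_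
  rw [aug_add n a a' (v 0)]; ring

lemma A_add2 (a b b' c d : Fin n → ℂ) :
    A n F a (b + b') c d = A n F a b c d + A n F a b' c d := by
  simp only [A_apply, ← Finset.sum_add_distrib]
  refine Finset.sum_congr rfl fun v _ => ?_
  rw [aug_add n b b' (v 1)]; ring

lemma A_add3 (a b c c' d : Fin n → ℂ) :
    A n F a b (c + c') d = A n F a b c d + A n F a b c' d := by
  simp only [A_apply, ← Finset.sum_add_distrib]
  refine Finset.sum_congr rfl fun v _ => ?_
  rw [aug_add n c c' (v 2)]; ring

lemma A_add4 (a b c d d' : Fin n → ℂ) :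
    A n F a b c (d + d') = A n F a b c d + A n F a b c d' := by
  simp only [A_apply, ← Finset.sum_add_distrib]
  refine Finset.sum_congr rfl fun v _ => ?_
  rw [aug_add n d d' (v 3)]; ring

lemma A_neg1 (a b c d : Fin n → ℂ) : A n F (-a) b c d = - A n F a b c d := by
  simp only [A_apply, ← Finset.sum_neg_distrib]
  refine Finset.sum_congr rfl fun v _ => ?_
  rw [aug_neg n a (v 0)]; ring

lemma A_neg2 (a b c d : Fin n → ℂ) : A n F a (-b) c d = - A n F a b c d := by
  simp only [A_apply, ← Finset.sum_neg_distrib]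
  refine Finset.sum_congr rfl fun v _ => ?_
  rw [aug_neg n b (v 1)]; ring

lemma A_neg3 (a b c d : Fin n → ℂ) : A n F a b (-c) d = - A n F a b c d := by
  simp only [A_apply, ← Finset.sum_neg_distrib]
  refine Finset.sum_congr rfl fun v _ => ?_
  rw [aug_neg n c (v 2)]; ring

lemma A_neg4 (a b c d : Fin n → ℂ) : A n F a b c (-d) = - A n F a b c d := by
  simp only [A_apply, ← Finset.sum_neg_distrib]
  refine Finset.sum_congr rfl fun v _ => ?_
  rw [aug_neg n d (v 3)]; ring

lemma A_smul1 (t : ℝ) (a b c d : Fin n → ℂ) :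
    A n F (t • a) b c d = (t : ℂ) * A n F a b c d := by
  simp only [A_apply, Finset.mul_sum]
  refine Finset.sum_congr rfl fun v _ => ?_
  rw [aug_smul n t a (v 0)]; ring

lemma A_smul2 (t : ℝ) (a b c d : Fin n → ℂ) :
    A n F a (t • b) c d = (t : ℂ) * A n F a b c d := by
  simp only [A_apply, Finset.mul_sum]
  refine Finset.sum_congr rfl fun v _ => ?_
  rw [aug_smul n t b (v 1)]; ring

lemma A_smul3 (t : ℝ) (a b c d : Fin n → ℂ) :
    A n F a b (t • c) d = (t : ℂ) * A n F a b c d := by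
  simp only [A_apply, Finset.mul_sum]
  refine Finset.sum_congr rfl fun v _ => ?_
  rw [aug_smul n t c (v 2)]; ring

lemma A_smul4 (t : ℝ) (a b c d : Fin n → ℂ) :
    A n F a b c (t • d) = (t : ℂ) * A n F a b c d := by
  simp only [A_apply, Finset.mul_sum]
  refine Finset.sum_congr rfl fun v _ => ?_
  rw [aug_smul n t d (v 3)]; ring

lemma tf_comp_perm
    (hsym : ∀ (σ : Equiv.Perm (Fin 4)) (v : Fin 4 → (Fin n ⊕ Fin n)), F (v ∘ σ) = F v)
    (σ : Equiv.Perm (Fin 4)) (u : Fin 4 → (Fin n ⊕ Fin n) → ℂ) :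
    tensorForm n F (fun k => u (σ k)) = tensorForm n F u := by
  unfold tensorForm
  refine Fintype.sum_bijective (fun v => v ∘ ⇑σ.symm) ?_ _ _ ?_
  · constructor
    · intro v w h
      funext k
      have := congrFun h (σ k)
      simpa using this
    · intro w
      exact ⟨w ∘ ⇑σ, by funext k; simp⟩
  · intro v
    have hv : (v ∘ ⇑σ.symm) ∘ ⇑σ = v := by funext k; simp
    have hF : F v = F (v ∘ ⇑σ.symm) := by
      conv_lhs => rw [← hv]
      exact hsym σ _
    have h2 : (∏ k, u (σ k) (v k)) = ∏ k, u k ((v ∘ ⇑σ.symm) k) := by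
      rw [← Equiv.prod_comp σ (fun k => u k ((v ∘ ⇑σ.symm) k))]
      refine Finset.prod_congr rfl fun k _ => ?_
      simp [Function.comp]
    rw [hF, h2]

lemma A_perm
    (hsym : ∀ (σ : Equiv.Perm (Fin 4)) (v : Fin 4 → (Fin n ⊕ Fin n)), F (v ∘ σ) = F v)
    (σ : Equiv.Perm (Fin 4)) (y : Fin 4 → (Fin n → ℂ)) :
    tensorForm n F (fun p => aug n (y (σ p))) = tensorForm n F (fun p => aug n (y p)) :=
  tf_comp_perm n F hsym σ (fun p => aug n (y p))

section Swaps

variable (hsym : ∀ (σ : Equiv.Perm (Fin 4)) (v : Fin 4 → (Fin n ⊕ Fin n)), F (v ∘ σ) = F v)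

include hsym

lemma Asw01 (a b c d : Fin n → ℂ) : A n F b a c d = A n F a b c d := by
  have h := A_perm n F hsym (Equiv.swap 0 1) ![a, b, c, d]
  have e : (fun p => aug n (![a, b, c, d] ((Equiv.swap (0 : Fin 4) 1) p)))
      = fun p => aug n (![b, a, c, d] p) := by
    funext p
    fin_cases p <;> simp [Equiv.swap_apply_def]
  simp only [A]
  rw [← e]
  exact h

lemma Asw12 (a b c d : Fin n → ℂ) : A n F a c b d = A n F a b c d := by
  have h := A_perm n F hsym (Equiv.swap 1 2) ![a, b, c, d]
  have e : (fun p => aug n (![a, b, c, d] ((Equiv.swap (1 : Fin 4) 2) p)))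
      = fun p => aug n (![a, c, b, d] p) := by
    funext p
    fin_cases p <;> simp [Equiv.swap_apply_def]
  simp only [A]
  rw [← e]
  exact h

lemma Asw23 (a b c d : Fin n → ℂ) : A n F a b d c = A n F a b c d := by
  have h := A_perm n F hsym (Equiv.swap 2 3) ![a, b, c, d]
  have e : (fun p => aug n (![a, b, c, d] ((Equiv.swap (2 : Fin 4) 3) p)))
      = fun p => aug n (![a, b, d, c] p) := by
    funext p
    fin_cases p <;> simp [Equiv.swap_apply_def]
  simp only [A]
  rw [← e]
  exact h

lemma S1 (u w : Fin n → ℂ) : A n F u w u w = A n F u u w w := by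
  exact Asw12 n F hsym u u w w

lemma S2 (u w : Fin n → ℂ) : A n F w w u u = A n F u u w w := by
  calc A n F w w u u = A n F w u w u := Asw12 n F hsym w u w u
    _ = A n F u w w u := Asw01 n F hsym u w w u
    _ = A n F u w u w := Asw23 n F hsym u w u w
    _ = A n F u u w w := Asw12 n F hsym u u w w

lemma S3 (u w : Fin n → ℂ) : A n F u w u u = A n F u u u w := by
  calc A n F u w u u = A n F u u w u := (Asw12 n F hsym u u w u)
    _ = A n F u u u w := Asw23 n F hsym u u u w

lemma S4 (u w : Fin n → ℂ) : A n F w w u w = A n F u w w w := by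
  calc A n F w w u w = A n F w u w w := Asw12 n F hsym w u w w
    _ = A n F u w w w := Asw01 n F hsym u w w w

lemma Epair12_add (p q w w' : Fin n → ℂ) :
    A n F (p + q) (p + q) w w' = A n F p p w w' + 2 * A n F p q w w' + A n F q q w w' := by
  rw [A_add1, A_add2, A_add2, Asw01 n F hsym p q w w']
  ring

lemma Epair12_sub (p q w w' : Fin n → ℂ) :
    A n F (p - q) (p - q) w w' = A n F p p w w' - 2 * A n F p q w w' + A n F q q w w' := by
  have h : p - q = p + -q := by abel
  rw [h, A_add1, A_add2, A_add2, A_neg2, A_neg1, A_neg1, A_neg2,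
    Asw01 n F hsym p q w w']
  ring

lemma Epair34_add (w w' p q : Fin n → ℂ) :
    A n F w w' (p + q) (p + q) = A n F w w' p p + 2 * A n F w w' p q + A n F w w' q q := by
  rw [A_add3, A_add4, A_add4, Asw23 n F hsym w w' p q]
  ring

lemma Epair34_sub (w w' p q : Fin n → ℂ) :
    A n F w w' (p - q) (p - q) = A n F w w' p p - 2 * A n F w w' p q + A n F w w' q q := by
  have h : p - q = p + -q := by abel
  rw [h, A_add3, A_add4, A_add4, A_neg4, A_neg3, A_neg3, A_neg4,
    Asw23 n F hsym w w' p q]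
  ring

lemma N1 (u w : Fin n → ℂ) :
    A n F (u + w) (u + w) (u + w) (u + w) + A n F (u - w) (u - w) (u - w) (u - w)
      = 2 * A n F u u u u + 12 * A n F u u w w + 2 * A n F w w w w := by
  simp only [Epair12_add n F hsym, Epair12_sub n F hsym,
    Epair34_add n F hsym, Epair34_sub n F hsym]
  rw [S3 n F hsym u w, S1 n F hsym u w, S2 n F hsym u w, S4 n F hsym u w]
  ring

lemma N2 (u w : Fin n → ℂ) :
    A n F (u + w) (u + w) (u - w) (u - w)
      = A n F u u u u + A n F w w w w - 2 * A n F u u w w := by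
  simp only [Epair12_add n F hsym, Epair34_sub n F hsym]
  rw [S3 n F hsym u w, S1 n F hsym u w, S2 n F hsym u w, S4 n F hsym u w]
  ring

lemma N3 (x1 x2 x3 x4 : Fin n → ℂ) :
    16 * A n F x1 x2 x3 x4
      = A n F (x1 + x2) (x1 + x2) (x3 + x4) (x3 + x4)
        - A n F (x1 + x2) (x1 + x2) (x3 - x4) (x3 - x4)
        - A n F (x1 - x2) (x1 - x2) (x3 + x4) (x3 + x4)
        + A n F (x1 - x2) (x1 - x2) (x3 - x4) (x3 - x4) := by
  have h1 := Epair34_add n F hsym (x1 + x2) (x1 + x2) x3 x4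
  have h2 := Epair34_sub n F hsym (x1 + x2) (x1 + x2) x3 x4
  have h3 := Epair34_add n F hsym (x1 - x2) (x1 - x2) x3 x4
  have h4 := Epair34_sub n F hsym (x1 - x2) (x1 - x2) x3 x4
  have h5 := Epair12_add n F hsym x1 x2 x3 x4
  have h6 := Epair12_sub n F hsym x1 x2 x3 x4
  linear_combination -h1 + h2 + h3 - h4 - 4 * h5 + 4 * h6

end Swaps

lemma A_conj
    (hconj : ∀ v : Fin 4 → (Fin n ⊕ Fin n), F (fun k => (v k).swap) = starRingEnd ℂ (F v))
    (y : Fin 4 → (Fin n → ℂ)) :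
    (starRingEnd ℂ) (tensorForm n F (fun p => aug n (y p)))
      = tensorForm n F (fun p => aug n (y p)) := by
  unfold tensorForm
  rw [map_sum]
  refine Fintype.sum_bijective (fun v : Fin 4 → (Fin n ⊕ Fin n) => fun k => (v k).swap)
    ?_ _ _ ?_
  · exact Function.Involutive.bijective (fun v => by funext k; simp)
  · intro v
    rw [map_mul, ← hconj v, map_prod]
    congr 1
    exact Finset.prod_congr rfl fun k _ => aug_conj n (y k) (v k)

lemma A_im
    (hconj : ∀ v : Fin 4 → (Fin n ⊕ Fin n), F (fun k => (v k).swap) = starRingEnd ℂ (F v))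
    (a b c d : Fin n → ℂ) : (A n F a b c d).im = 0 :=
  Complex.conj_eq_iff_im.mp (A_conj n F hconj ![a, b, c, d])

lemma A_re
    (hconj : ∀ v : Fin 4 → (Fin n ⊕ Fin n), F (fun k => (v k).swap) = starRingEnd ℂ (F v))
    (a b c d : Fin n → ℂ) : (((A n F a b c d).re : ℝ) : ℂ) = A n F a b c d :=
  Complex.conj_eq_iff_re.mp (A_conj n F hconj ![a, b, c, d])

end Stmt4Aux

open Stmt4Aux in
theorem stmt4 (n : ℕ) (F : (Fin 4 → (Fin n ⊕ Fin n)) → ℂ)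
    -- super-symmetry: invariance under all permutations of the four indices
    (hsym : ∀ (σ : Equiv.Perm (Fin 4)) (v : Fin 4 → (Fin n ⊕ Fin n)), F (v ∘ σ) = F v)
    -- conjugate symmetry: F_{i₁i₂i₃i₄} = conj F_{j₁j₂j₃j₄} when |i_k − j_k| = n for all k
    (hconj : ∀ v : Fin 4 → (Fin n ⊕ Fin n), F (fun k => (v k).swap) = starRingEnd ℂ (F v))
    (ftilde : (Fin n → ℂ) → ℝ)
    -- f̃ is the real-valued quartic form associated with F
    (hform : ∀ x : Fin n → ℂ,
      (ftilde x : ℂ) = tensorForm n F (fun _ => aug n x))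
    -- convexity of f̃ on ℂ^n ≅ ℝ^{2n}
    (hconv : ConvexOn ℝ Set.univ ftilde)
    (x : Fin 4 → (Fin n → ℂ)) :
    (tensorForm n F (fun p => aug n (x p))).im = 0 ∧
    (tensorForm n F (fun p => aug n (x p))).re ≤
      max (max (ftilde (x 0)) (ftilde (x 1))) (max (ftilde (x 2)) (ftilde (x 3))) := by
  -- the quartic form in terms of `A`
  have qf : ∀ y : Fin n → ℂ, (ftilde y : ℂ) = A n F y y y y := by
    intro y
    rw [hform y]
    simp only [A]
    congr 1
    funext p
    fin_cases p <;> rfl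
  -- real versions of the multilinear identities
  have RN1 : ∀ u w : Fin n → ℂ,
      ftilde (u + w) + ftilde (u - w)
        = 2 * ftilde u + 12 * (A n F u u w w).re + 2 * ftilde w := by
    intro u w
    have h := N1 n F hsym u w
    rw [← qf (u + w), ← qf (u - w), ← qf u, ← qf w, ← A_re n F hconj u u w w] at h
    exact_mod_cast h
  have RN2 : ∀ u w : Fin n → ℂ,
      (A n F (u + w) (u + w) (u - w) (u - w)).re
        = ftilde u + ftilde w - 2 * (A n F u u w w).re := by
    intro u w
    have h := N2 n F hsym u w
    rw [← qf u, ← qf w, ← A_re n F hconj u u w w,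
      ← A_re n F hconj (u + w) (u + w) (u - w) (u - w)] at h
    exact_mod_cast h
  -- basic properties of ftilde
  have f0 : ftilde 0 = 0 := by
    have h0 : A n F (0 : Fin n → ℂ) 0 0 0 = 0 := by
      have h := A_smul1 n F 0 (0 : Fin n → ℂ) 0 0 0
      simpa using h
    have := qf 0
    rw [h0] at this
    exact_mod_cast this
  have feven : ∀ w : Fin n → ℂ, ftilde (-w) = ftilde w := by
    intro w
    have h : A n F (-w) (-w) (-w) (-w) = A n F w w w w := by
      rw [A_neg1, A_neg2, A_neg3, A_neg4]; ring
    have := qf (-w)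
    rw [h, ← qf w] at this
    exact_mod_cast this
  have C1 : ∀ u w : Fin n → ℂ, 2 * ftilde u ≤ ftilde (u + w) + ftilde (u - w) := by
    intro u w
    have key : ((1 : ℝ)/2) • (u + w) + ((1 : ℝ)/2) • (u - w) = u := by
      module
    have h := hconv.2 (Set.mem_univ (u + w)) (Set.mem_univ (u - w))
      (by norm_num : (0:ℝ) ≤ 1/2) (by norm_num : (0:ℝ) ≤ 1/2) (by norm_num)
    rw [key] at h
    simp only [smul_eq_mul] at h
    linarith
  have fnonneg : ∀ w : Fin n → ℂ, 0 ≤ ftilde w := by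
    intro w
    have h := C1 0 w
    rw [zero_add, zero_sub, feven w, f0] at h
    linarith
  -- positive semidefiniteness of the pair form
  have P : ∀ u w : Fin n → ℂ, 0 ≤ (A n F u u w w).re := by
    intro u w
    have ht : ∀ t : ℝ, 0 ≤ 12 * t^2 * (A n F u u w w).re + 2 * t^4 * ftilde w := by
      intro t
      have h1 := C1 u (t • w)
      have h2 := RN1 u (t • w)
      have hA : A n F u u (t • w) (t • w) = ((t^2 : ℝ) : ℂ) * A n F u u w w := by
        rw [A_smul3, A_smul4]
        push_cast
        ring
      have hAre : (A n F u u (t • w) (t • w)).re = t^2 * (A n F u u w w).re := by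
        rw [hA, Complex.re_ofReal_mul]
      have hfw : ftilde (t • w) = t^4 * ftilde w := by
        have h : A n F (t • w) (t • w) (t • w) (t • w)
            = ((t^4 : ℝ) : ℂ) * A n F w w w w := by
          rw [A_smul1, A_smul2, A_smul3, A_smul4]
          push_cast
          ring
        have h' := qf (t • w)
        rw [h, ← qf w] at h'
        exact_mod_cast h'
      rw [hAre, hfw] at h2
      linarith
    by_contra hc
    push_neg at hc
    set R := (A n F u u w w).re with hR
    rcases eq_or_lt_of_le (fnonneg w) with hw | hw
    · have h := ht 1
      rw [← hw] at h
      norm_num at h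
      linarith
    · set s : ℝ := (-3 * R) / ftilde w with hs
      have hspos : 0 < s := by
        apply div_pos
        · linarith
        · exact hw
      have h2 : Real.sqrt s ^ 2 = s := Real.sq_sqrt hspos.le
      have h4 : Real.sqrt s ^ 4 = s ^ 2 := by
        have : Real.sqrt s ^ 4 = (Real.sqrt s ^ 2) ^ 2 := by ring
        rw [this, h2]
      have h := ht (Real.sqrt s)
      rw [h2, h4] at h
      have hval : 12 * s * R + 2 * s^2 * ftilde w = -18 * R^2 / ftilde w := by
        rw [hs]
        field_simp
        ring
      rw [hval] at h
      have hR2 : 0 < R^2 := by nlinarith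
      have : -18 * R^2 / ftilde w < 0 := by
        apply div_neg_of_neg_of_pos
        · nlinarith
        · exact hw
      linarith
  -- the two key inequalities
  have L1 : ∀ u w : Fin n → ℂ, (A n F u u w w).re ≤ (ftilde u + ftilde w) / 2 := by
    intro u w
    have h := RN2 u w
    have h0 := P (u + w) (u - w)
    rw [h] at h0
    linarith
  have L2 : ∀ u w : Fin n → ℂ,
      ftilde (u + w) + ftilde (u - w) ≤ 8 * (ftilde u + ftilde w) := by
    intro u w
    have h := RN1 u w
    have h1 := L1 u w
    linarith
  -- rewrite the tensor form via `A`
  have hT : tensorForm n F (fun p => aug n (x p)) = A n F (x 0) (x 1) (x 2) (x 3) := by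
    simp only [A]
    congr 1
    funext p
    fin_cases p <;> rfl
  constructor
  · rw [hT]; exact A_im n F hconj _ _ _ _
  · rw [hT]
    have h3 := N3 n F hsym (x 0) (x 1) (x 2) (x 3)
    have RN3 : 16 * (A n F (x 0) (x 1) (x 2) (x 3)).re
        = (A n F (x 0 + x 1) (x 0 + x 1) (x 2 + x 3) (x 2 + x 3)).re
          - (A n F (x 0 + x 1) (x 0 + x 1) (x 2 - x 3) (x 2 - x 3)).re
          - (A n F (x 0 - x 1) (x 0 - x 1) (x 2 + x 3) (x 2 + x 3)).re
          + (A n F (x 0 - x 1) (x 0 - x 1) (x 2 - x 3) (x 2 - x 3)).re := by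
      rw [← A_re n F hconj (x 0) (x 1) (x 2) (x 3),
        ← A_re n F hconj (x 0 + x 1) (x 0 + x 1) (x 2 + x 3) (x 2 + x 3),
        ← A_re n F hconj (x 0 + x 1) (x 0 + x 1) (x 2 - x 3) (x 2 - x 3),
        ← A_re n F hconj (x 0 - x 1) (x 0 - x 1) (x 2 + x 3) (x 2 + x 3),
        ← A_re n F hconj (x 0 - x 1) (x 0 - x 1) (x 2 - x 3) (x 2 - x 3)] at h3
      exact_mod_cast h3
    have e1 := L1 (x 0 + x 1) (x 2 + x 3)
    have e2 := P (x 0 + x 1) (x 2 - x 3)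
    have e3 := P (x 0 - x 1) (x 2 + x 3)
    have e4 := L1 (x 0 - x 1) (x 2 - x 3)
    have g1 := L2 (x 0) (x 1)
    have g2 := L2 (x 2) (x 3)
    set M := max (max (ftilde (x 0)) (ftilde (x 1))) (max (ftilde (x 2)) (ftilde (x 3)))
      with hM
    have m0 : ftilde (x 0) ≤ M := le_max_of_le_left (le_max_left _ _)
    have m1 : ftilde (x 1) ≤ M := le_max_of_le_left (le_max_right _ _)
    have m2 : ftilde (x 2) ≤ M := le_max_of_le_right (le_max_left _ _)
    have m3 : ftilde (x 3) ≤ M := le_max_of_le_right (le_max_right _ _)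
    linarith
end

section
/- In the problem of maximizing Re(dᴴc) over c ∈ ℂ^M subject to ‖c‖² ≤ 1 and 2Re(c₀ᴴc) ≥ 2 − ζ (with ‖c₀‖ = 1, 0 ≤ ζ ≤ 2), if d = −ϱ c₀ for some ϱ > 0 and M ≥ 2, then c* = δc₀ + √(1 − δ²)·c₀⊥/‖c₀⊥‖ with δ = (2 − ζ)/2 and c₀⊥ any nonzero vector orthogonal to c₀ is an optimal solution, with optimal value −ϱδ. -/
/-! Write `c = a c₀ + w` with `w ⊥ c₀`. Since `d = -ϱ c₀`, the objective is `-ϱ a`, and the linear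
constraint says `a ≥ δ`, so every feasible point has value at most `-ϱ δ`. The point `c*` attains
`a = δ` and, its two components being orthogonal, has squared norm `δ² + (1 - δ²) = 1`. -/

open scoped InnerProductSpace

section

variable {𝕜 E : Type*} [RCLike 𝕜] [NormedAddCommGroup E] [InnerProductSpace 𝕜 E] {u v : E}

theorem inner_smul_add_smul_of_inner_eq_zero (hu : ‖u‖ = 1) (huv : ⟪u, v⟫_𝕜 = 0) (a b : 𝕜) :
    ⟪u, a • u + b • v⟫_𝕜 = a := by
  rw [inner_add_right, inner_smul_right, inner_smul_right, huv, inner_self_eq_norm_sq_to_K, hu]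
  simp

theorem norm_sq_smul_add_div_norm_smul_of_inner_eq_zero (hu : ‖u‖ = 1) (huv : ⟪u, v⟫_𝕜 = 0)
    (hv : v ≠ 0) (a t : ℝ) :
    ‖(a : 𝕜) • u + ((t / ‖v‖ : ℝ) : 𝕜) • v‖ ^ 2 = a ^ 2 + t ^ 2 := by
  have horth : ⟪(a : 𝕜) • u, ((t / ‖v‖ : ℝ) : 𝕜) • v⟫_𝕜 = 0 := by
    rw [inner_smul_left, inner_smul_right, huv, mul_zero, mul_zero]
  rw [norm_add_sq (𝕜 := 𝕜), horth, map_zero, mul_zero, add_zero, norm_smul, norm_smul,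
    RCLike.norm_ofReal, RCLike.norm_ofReal, hu, abs_div, abs_norm,
    div_mul_cancel₀ _ (norm_ne_zero_iff.mpr hv), mul_one, sq_abs, sq_abs]

theorem re_inner_neg_ofReal_smul_left (r : ℝ) (u c : E) :
    RCLike.re ⟪-((r : 𝕜) • u), c⟫_𝕜 = -r * RCLike.re ⟪u, c⟫_𝕜 := by
  rw [inner_neg_left, inner_smul_real_left, map_neg, RCLike.smul_re, neg_mul]

theorem re_inner_neg_ofReal_smul_le {r δ : ℝ} {c : E} (hr : 0 ≤ r) (h : δ ≤ RCLike.re ⟪u, c⟫_𝕜) :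
    RCLike.re ⟪-((r : 𝕜) • u), c⟫_𝕜 ≤ -r * δ := by
  rw [re_inner_neg_ofReal_smul_left, neg_mul, neg_mul, neg_le_neg_iff]
  exact mul_le_mul_of_nonneg_left h hr

end

theorem stmt9_general (M : ℕ) (d c₀ cperp : EuclideanSpace ℂ (Fin M))
    (hc₀ : ‖c₀‖ = 1) (ζ : ℝ) (hζ0 : 0 ≤ ζ) (hζ2 : ζ ≤ 2)
    (ϱ : ℝ) (hϱ : 0 < ϱ) (hd : d = -(ϱ • c₀))
    (hperp : cperp ≠ 0) (horth : (inner ℂ c₀ cperp : ℂ) = 0)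
    (δ : ℝ) (hδ : δ = (2 - ζ) / 2)
    (cstar : EuclideanSpace ℂ (Fin M))
    (hcstar : cstar = δ • c₀ + (Real.sqrt (1 - δ ^ 2) / ‖cperp‖) • cperp) :
    (‖cstar‖ ^ 2 ≤ 1 ∧ 2 - ζ ≤ 2 * (inner ℂ c₀ cstar : ℂ).re) ∧
    (inner ℂ d cstar : ℂ).re = -ϱ * δ ∧
    ∀ c : EuclideanSpace ℂ (Fin M), ‖c‖ ^ 2 ≤ 1 →
      2 - ζ ≤ 2 * (inner ℂ c₀ c : ℂ).re →
      (inner ℂ d c : ℂ).re ≤ -ϱ * δ := by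
  simp only [RCLike.real_smul_eq_coe_smul (K := ℂ)] at hd hcstar
  have hδsq : δ ^ 2 ≤ 1 := by
    rw [sq_le_one_iff_abs_le_one, abs_le, hδ]; constructor <;> linarith
  have hinner : ⟪c₀, cstar⟫_ℂ = δ := by
    rw [hcstar]; exact inner_smul_add_smul_of_inner_eq_zero hc₀ horth _ _
  have hnorm : ‖cstar‖ ^ 2 = 1 := by
    rw [hcstar, norm_sq_smul_add_div_norm_smul_of_inner_eq_zero hc₀ horth hperp,
      Real.sq_sqrt (by linarith)]
    ring
  subst hd
  refine ⟨⟨hnorm.le, ?_⟩, ?_, fun c _ hc => ?_⟩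
  · rw [hinner, Complex.ofReal_re, hδ]; linarith
  · simpa only [RCLike.re_to_complex, hinner, Complex.ofReal_re] using
      re_inner_neg_ofReal_smul_left (𝕜 := ℂ) ϱ c₀ cstar
  · refine re_inner_neg_ofReal_smul_le (𝕜 := ℂ) hϱ.le ?_
    rw [RCLike.re_to_complex, hδ]; linarith

theorem stmt9 (M : ℕ) (hM : 2 ≤ M) (d c₀ cperp : EuclideanSpace ℂ (Fin M))
    (hc₀ : ‖c₀‖ = 1) (ζ : ℝ) (hζ0 : 0 ≤ ζ) (hζ2 : ζ ≤ 2)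
    (ϱ : ℝ) (hϱ : 0 < ϱ) (hd : d = -(ϱ • c₀))
    (hperp : cperp ≠ 0) (horth : (inner ℂ c₀ cperp : ℂ) = 0)
    (δ : ℝ) (hδ : δ = (2 - ζ) / 2)
    (cstar : EuclideanSpace ℂ (Fin M))
    (hcstar : cstar = δ • c₀ + (Real.sqrt (1 - δ ^ 2) / ‖cperp‖) • cperp) :
    (‖cstar‖ ^ 2 ≤ 1 ∧ 2 - ζ ≤ 2 * (inner ℂ c₀ cstar : ℂ).re) ∧
    (inner ℂ d cstar : ℂ).re = -ϱ * δ ∧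
    ∀ c : EuclideanSpace ℂ (Fin M), ‖c‖ ^ 2 ≤ 1 →
      2 - ζ ≤ 2 * (inner ℂ c₀ c : ℂ).re →
      (inner ℂ d c : ℂ).re ≤ -ϱ * δ :=
  stmt9_general M d c₀ cperp hc₀ ζ hζ0 hζ2 ϱ hϱ hd hperp horth δ hδ cstar hcstar
end

section
/- Let f̃: ℂ^M → ℝ (viewed as a function on ℝ^{2M}) be given by f̃(x) = μ₁(xᴴx)² + μ₂(xᴴx) + α₀ xᴴDx + Σ_{j=1}^{J} α_j xᴴA_j x · xᴴB_jᴴ x, with D Hermitian and, for each j, either A_j, B_j Hermitian or A_j = B_j. If μ₂ I + α₀ D ⪰ 0 and for all unit vectors y, z ∈ ℂ^M one has μ₁(2‖y‖²‖z‖² + (yᴴz + zᴴy)²) + Σ_j α_j h(y,z,A_j,B_j) ≥ 0 where h is the symmetrized sixfold cross form h(y,z,A,B) = yᴴAy·zᴴBᴴz + yᴴAz·yᴴBᴴz + yᴴAz·zᴴBᴴy + zᴴAy·yᴴBᴴz + zᴴAy·zᴴBᴴy + zᴴAz·yᴴBᴴy, then f̃ is convex on ℂ^M. -/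
open Matrix ComplexOrder
open scoped BigOperators

/-- The symmetrized sixfold cross form h(y,z,A,B). -/
noncomputable def crossForm (M : ℕ) (y z : Fin M → ℂ)
    (A B : Matrix (Fin M) (Fin M) ℂ) : ℂ :=
  dotProduct (star y) (A.mulVec y) * dotProduct (star z) (Bᴴ.mulVec z) +
  dotProduct (star y) (A.mulVec z) * dotProduct (star y) (Bᴴ.mulVec z) +
  dotProduct (star y) (A.mulVec z) * dotProduct (star z) (Bᴴ.mulVec y) +
  dotProduct (star z) (A.mulVec y) * dotProduct (star y) (Bᴴ.mulVec z) +
  dotProduct (star z) (A.mulVec y) * dotProduct (star z) (Bᴴ.mulVec y) +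
  dotProduct (star z) (A.mulVec z) * dotProduct (star y) (Bᴴ.mulVec y)

/-!
Convexity is tested on lines `t ↦ w + t • d`, along which `f̃` is a real quartic. Its second
derivative at `z = w + t • d` is `2 dᴴ(μ₂ I + α₀ D) d + 2 μ₁ h(d,z,1,1) + 2 Σⱼ αⱼ h(d,z,Aⱼ,Bⱼ)`:
each product `(xᴴAx)(xᴴBᴴx)` has second derivative `2 h(d,z,A,B)`, and `μ₁ ‖x‖⁴` is the case
`A = B = 1`, where `h(d,z,1,1) = 2‖d‖²‖z‖² + (dᴴz + zᴴd)²`. The first term is nonnegative by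
positive semidefiniteness, and the rest by the hypothesis on unit vectors, which extends to all
`d, z` because `h` is homogeneous of degree two in each argument.
-/

theorem ConvexOn.univ_of_forall_line {E : Type*} [AddCommGroup E] [Module ℝ E] {f : E → ℝ}
    (h : ∀ w d : E, ConvexOn ℝ Set.univ fun s : ℝ => f (w + s • d)) :
    ConvexOn ℝ Set.univ f := by
  refine ⟨convex_univ, fun x _ y _ a b ha hb hab => ?_⟩
  have hline := (h x (y - x)).2 (Set.mem_univ 0) (Set.mem_univ 1) ha hb hab
  have hb' : x + b • (y - x) = a • x + b • y := by
    obtain rfl : a = 1 - b := by linarith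
    module
  simpa [hb'] using hline

theorem convexOn_univ_re_of_hasDerivAt2 {g g' g'' : ℝ → ℂ}
    (hg : ∀ t, HasDerivAt g (g' t) t) (hg' : ∀ t, HasDerivAt g' (g'' t) t)
    (hg'' : ∀ t, 0 ≤ (g'' t).re) :
    ConvexOn ℝ Set.univ fun t => (g t).re := by
  have hre : ∀ {φ : ℝ → ℂ} {φ' : ℂ} {t : ℝ}, HasDerivAt φ φ' t →
      HasDerivAt (fun s => (φ s).re) φ'.re t :=
    fun h => Complex.reCLM.hasFDerivAt.comp_hasDerivAt _ h
  refine convexOn_of_hasDerivWithinAt2_nonneg convex_univ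
    (continuous_iff_continuousAt.2 fun t => (hre (hg t)).continuousAt).continuousOn
    (fun t _ => (hre (hg t)).hasDerivWithinAt) (fun t _ => (hre (hg' t)).hasDerivWithinAt)
    (fun t _ => hg'' t)

theorem nonneg_of_bihomogeneous_of_nonneg_on_unit {E : Type*} [AddCommGroup E] [Module ℝ E]
    {N : E → ℝ} {H : E → E → ℝ}
    (hN : ∀ (c : ℝ) y, N (c • y) = c ^ 2 * N y) (hN_pos : ∀ y, y ≠ 0 → 0 < N y)
    (hH : ∀ (c e : ℝ) y z, H (c • y) (e • z) = c ^ 2 * e ^ 2 * H y z)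
    (hH_unit : ∀ y z, N y = 1 → N z = 1 → 0 ≤ H y z) (y z : E) : 0 ≤ H y z := by
  rcases eq_or_ne y 0 with rfl | hy
  · simpa using (hH 0 1 0 z).ge
  rcases eq_or_ne z 0 with rfl | hz
  · simpa using (hH 1 0 y 0).ge
  have normalize : ∀ x, x ≠ 0 → N ((√(N x))⁻¹ • x) = 1 ∧ 0 < ((√(N x))⁻¹) ^ 2 := fun x hx => by
    rw [hN, inv_pow, Real.sq_sqrt (hN_pos x hx).le]
    exact ⟨inv_mul_cancel₀ (hN_pos x hx).ne', inv_pos.2 (hN_pos x hx)⟩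
  obtain ⟨hy1, hc⟩ := normalize y hy
  obtain ⟨hz1, he⟩ := normalize z hz
  have := hH_unit _ _ hy1 hz1
  rw [hH] at this
  exact nonneg_of_mul_nonneg_right (by linarith) (mul_pos hc he)

theorem hasDerivAt_const_add_smul {E : Type*} [NormedAddCommGroup E] [NormedSpace ℝ E]
    (w d : E) (t : ℝ) :
    HasDerivAt (fun s : ℝ => w + s • d) d t := by
  simpa using ((hasDerivAt_id t).smul_const d).const_add w

section

variable {n : Type*} [Fintype n]

theorem HasDerivAt.star_dotProduct_mulVec (C : Matrix n n ℂ)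
    {u v : ℝ → n → ℂ} {u' v' : n → ℂ} {t : ℝ}
    (hu : HasDerivAt u u' t) (hv : HasDerivAt v v' t) :
    HasDerivAt (fun s => star (u s) ⬝ᵥ C *ᵥ v s)
      (star u' ⬝ᵥ C *ᵥ v t + star (u t) ⬝ᵥ C *ᵥ v') t := by
  have hCv : ∀ i, HasDerivAt (fun s => (C *ᵥ v s) i) ((C *ᵥ v') i) t := fun i => by
    simpa only [mulVec, dotProduct] using
      HasDerivAt.fun_sum fun j _ => (hasDerivAt_pi.1 hv j).const_mul (C i j)
  simpa only [dotProduct, Pi.star_apply, ← Finset.sum_add_distrib] using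
    HasDerivAt.fun_sum fun i _ => (hasDerivAt_pi.1 hu i).star.fun_mul (hCv i)

theorem hasDerivAt_quadForm_line (C : Matrix n n ℂ) (w d : n → ℂ) (t : ℝ) :
    HasDerivAt (fun s : ℝ => star (w + s • d) ⬝ᵥ C *ᵥ (w + s • d))
      (star d ⬝ᵥ C *ᵥ (w + t • d) + star (w + t • d) ⬝ᵥ C *ᵥ d) t :=
  (hasDerivAt_const_add_smul w d t).star_dotProduct_mulVec C (hasDerivAt_const_add_smul w d t)

theorem hasDerivAt_deriv_quadForm_line (C : Matrix n n ℂ) (w d : n → ℂ) (t : ℝ) :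
    HasDerivAt (fun s : ℝ => star d ⬝ᵥ C *ᵥ (w + s • d) + star (w + s • d) ⬝ᵥ C *ᵥ d)
      (2 * (star d ⬝ᵥ C *ᵥ d)) t := by
  have hz := hasDerivAt_const_add_smul w d t
  refine (((hasDerivAt_const t d).star_dotProduct_mulVec C hz).fun_add
    (hz.star_dotProduct_mulVec C (hasDerivAt_const t d))).congr_deriv ?_
  simp only [star_zero, zero_dotProduct, mulVec_zero, dotProduct_zero]
  ring

noncomputable def quadProd (A B : Matrix n n ℂ) (x : n → ℂ) : ℂ :=
  (star x ⬝ᵥ A *ᵥ x) * (star x ⬝ᵥ Bᴴ *ᵥ x)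

noncomputable def quadProdDeriv (A B : Matrix n n ℂ) (y z : n → ℂ) : ℂ :=
  (star y ⬝ᵥ A *ᵥ z + star z ⬝ᵥ A *ᵥ y) * (star z ⬝ᵥ Bᴴ *ᵥ z) +
    (star z ⬝ᵥ A *ᵥ z) * (star y ⬝ᵥ Bᴴ *ᵥ z + star z ⬝ᵥ Bᴴ *ᵥ y)

theorem hasDerivAt_quadProd_line (A B : Matrix n n ℂ) (w d : n → ℂ) (t : ℝ) :
    HasDerivAt (fun s : ℝ => quadProd A B (w + s • d)) (quadProdDeriv A B d (w + t • d)) t :=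
  (hasDerivAt_quadForm_line A w d t).fun_mul (hasDerivAt_quadForm_line Bᴴ w d t)

theorem star_dotProduct_self_eq_sum_norm_sq (y : n → ℂ) :
    star y ⬝ᵥ y = ((∑ i, ‖y i‖ ^ 2 : ℝ) : ℂ) := by
  simp [dotProduct, Complex.conj_mul']

end

theorem hasDerivAt_quadProdDeriv_line {M : ℕ} (A B : Matrix (Fin M) (Fin M) ℂ)
    (w d : Fin M → ℂ) (t : ℝ) :
    HasDerivAt (fun s : ℝ => quadProdDeriv A B d (w + s • d))
      (2 * crossForm M d (w + t • d) A B) t := by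
  refine (((hasDerivAt_deriv_quadForm_line A w d t).fun_mul
    (hasDerivAt_quadForm_line Bᴴ w d t)).fun_add ((hasDerivAt_quadForm_line A w d t).fun_mul
    (hasDerivAt_deriv_quadForm_line Bᴴ w d t))).congr_deriv ?_
  unfold crossForm
  ring

theorem re_crossForm_one_one {M : ℕ} (y z : Fin M → ℂ) :
    (crossForm M y z 1 1).re =
      2 * (∑ i, ‖y i‖ ^ 2) * (∑ i, ‖z i‖ ^ 2) + (2 * (star y ⬝ᵥ z).re) ^ 2 := by
  have h : crossForm M y z 1 1 =
      2 * (star y ⬝ᵥ y) * (star z ⬝ᵥ z) + (star y ⬝ᵥ z + star z ⬝ᵥ y) ^ 2 := by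
    simp only [crossForm, conjTranspose_one, one_mulVec]
    ring
  rw [h, star_dotProduct z y, Complex.star_def, Complex.add_conj,
    star_dotProduct_self_eq_sum_norm_sq, star_dotProduct_self_eq_sum_norm_sq]
  norm_cast

theorem crossForm_smul_smul {M : ℕ} (c e : ℝ) (y z : Fin M → ℂ)
    (A B : Matrix (Fin M) (Fin M) ℂ) :
    crossForm M (c • y) (e • z) A B = ((c ^ 2 * e ^ 2 : ℝ) : ℂ) * crossForm M y z A B := by
  simp only [crossForm, star_smul, mulVec_smul, dotProduct_smul, smul_dotProduct, star_trivial,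
    Complex.real_smul]
  push_cast
  ring

theorem crossForm_combination_nonneg {M J : ℕ} (μ₁ : ℝ) (α : Fin J → ℝ)
    (A B : Fin J → Matrix (Fin M) (Fin M) ℂ)
    (hunit : ∀ y z : Fin M → ℂ, (∑ i, ‖y i‖ ^ 2 = 1) → (∑ i, ‖z i‖ ^ 2 = 1) →
      0 ≤ μ₁ * (2 * (∑ i, ‖y i‖ ^ 2) * (∑ i, ‖z i‖ ^ 2) + (2 * (star y ⬝ᵥ z).re) ^ 2) +
        ∑ j, α j * (crossForm M y z (A j) (B j)).re)
    (y z : Fin M → ℂ) :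
    0 ≤ μ₁ * (crossForm M y z 1 1).re + ∑ j, α j * (crossForm M y z (A j) (B j)).re := by
  refine nonneg_of_bihomogeneous_of_nonneg_on_unit (N := fun y : Fin M → ℂ => ∑ i, ‖y i‖ ^ 2)
    (H := fun y z => μ₁ * (crossForm M y z 1 1).re + ∑ j, α j * (crossForm M y z (A j) (B j)).re)
    (fun c y => ?_) (fun y hy => ?_) (fun c e y z => ?_) (fun y z hy hz => ?_) y z
  · simp [mul_pow, Finset.mul_sum]
  · have h := dotProduct_star_self_pos_iff.2 hy
    rwa [star_dotProduct_self_eq_sum_norm_sq, Complex.zero_lt_real] at h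
  · simp only [crossForm_smul_smul, Complex.re_ofReal_mul, mul_add, Finset.mul_sum, mul_left_comm]
  · simpa only [re_crossForm_one_one] using hunit y z hy hz

theorem convexOn_re_quartic {M J : ℕ} (μ₁ : ℝ) (E : Matrix (Fin M) (Fin M) ℂ) (α : Fin J → ℝ)
    (A B : Fin J → Matrix (Fin M) (Fin M) ℂ) (hE : ∀ v, 0 ≤ (star v ⬝ᵥ E *ᵥ v).re)
    (hcross : ∀ y z, 0 ≤ μ₁ * (crossForm M y z 1 1).re +
      ∑ j, α j * (crossForm M y z (A j) (B j)).re) :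
    ConvexOn ℝ Set.univ fun x => ((μ₁ : ℂ) * quadProd 1 1 x + star x ⬝ᵥ E *ᵥ x +
      ∑ j, (α j : ℂ) * quadProd (A j) (B j) x).re := by
  refine ConvexOn.univ_of_forall_line fun w d => convexOn_univ_re_of_hasDerivAt2
    (g' := fun t => (μ₁ : ℂ) * quadProdDeriv 1 1 d (w + t • d) +
      (star d ⬝ᵥ E *ᵥ (w + t • d) + star (w + t • d) ⬝ᵥ E *ᵥ d) +
      ∑ j, (α j : ℂ) * quadProdDeriv (A j) (B j) d (w + t • d))
    (g'' := fun t => (μ₁ : ℂ) * (2 * crossForm M d (w + t • d) 1 1) +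
      2 * (star d ⬝ᵥ E *ᵥ d) + ∑ j, (α j : ℂ) * (2 * crossForm M d (w + t • d) (A j) (B j)))
    (fun t => ?_) (fun t => ?_) (fun t => ?_)
  · exact (((hasDerivAt_quadProd_line 1 1 w d t).const_mul _).fun_add
      (hasDerivAt_quadForm_line E w d t)).fun_add
      (HasDerivAt.fun_sum fun j _ => (hasDerivAt_quadProd_line (A j) (B j) w d t).const_mul _)
  · exact (((hasDerivAt_quadProdDeriv_line 1 1 w d t).const_mul _).fun_add
      (hasDerivAt_deriv_quadForm_line E w d t)).fun_add
      (HasDerivAt.fun_sum fun j _ =>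
        (hasDerivAt_quadProdDeriv_line (A j) (B j) w d t).const_mul _)
  · simp only [Complex.add_re, Complex.re_sum, Complex.mul_re, Complex.re_ofNat,
      Complex.im_ofNat, Complex.ofReal_re, Complex.ofReal_im, zero_mul, sub_zero,
      mul_left_comm _ (2 : ℝ), ← Finset.mul_sum]
    linarith [hcross d (w + t • d), hE d]

theorem stmt15_general (M J : ℕ) (μ₁ μ₂ α₀ : ℝ) (α : Fin J → ℝ)
    (D : Matrix (Fin M) (Fin M) ℂ)
    (A B : Fin J → Matrix (Fin M) (Fin M) ℂ)
    (ftilde : (Fin M → ℂ) → ℝ)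
    (hf : ∀ x : Fin M → ℂ, (ftilde x : ℂ) =
      (μ₁ : ℂ) * (dotProduct (star x) x) ^ 2 +
      (μ₂ : ℂ) * (dotProduct (star x) x) +
      (α₀ : ℂ) * dotProduct (star x) (D.mulVec x) +
      ∑ j, (α j : ℂ) * dotProduct (star x) ((A j).mulVec x) *
        dotProduct (star x) ((B j)ᴴ.mulVec x))
    (hpsd : ((μ₂ : ℂ) • (1 : Matrix (Fin M) (Fin M) ℂ) + (α₀ : ℂ) • D).PosSemidef)
    (hineq : ∀ y z : Fin M → ℂ,
      (∑ i, ‖y i‖ ^ 2 = 1) → (∑ i, ‖z i‖ ^ 2 = 1) →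
      0 ≤ μ₁ * (2 * (∑ i, ‖y i‖ ^ 2) * (∑ i, ‖z i‖ ^ 2) +
            (2 * (dotProduct (star y) z).re) ^ 2) +
          ∑ j, α j * (crossForm M y z (A j) (B j)).re) :
    ConvexOn ℝ Set.univ ftilde := by
  have hE : ∀ v, 0 ≤ (star v ⬝ᵥ ((μ₂ : ℂ) • 1 + (α₀ : ℂ) • D) *ᵥ v).re := fun v =>
    (Complex.nonneg_iff.1 (hpsd.dotProduct_mulVec_nonneg v)).1
  convert convexOn_re_quartic μ₁ _ α A B hE (crossForm_combination_nonneg μ₁ α A B hineq) using 1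
  funext x
  rw [← Complex.ofReal_re (ftilde x), hf x]
  simp only [quadProd, conjTranspose_one, one_mulVec, add_mulVec, smul_mulVec, dotProduct_add,
    dotProduct_smul, smul_eq_mul]
  ring_nf

theorem stmt15 (M J : ℕ) (μ₁ μ₂ α₀ : ℝ) (α : Fin J → ℝ)
    (D : Matrix (Fin M) (Fin M) ℂ) (hD : D.IsHermitian)
    (A B : Fin J → Matrix (Fin M) (Fin M) ℂ)
    (hAB : ∀ j, ((A j).IsHermitian ∧ (B j).IsHermitian) ∨ A j = B j)
    (ftilde : (Fin M → ℂ) → ℝ)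
    (hf : ∀ x : Fin M → ℂ, (ftilde x : ℂ) =
      (μ₁ : ℂ) * (dotProduct (star x) x) ^ 2 +
      (μ₂ : ℂ) * (dotProduct (star x) x) +
      (α₀ : ℂ) * dotProduct (star x) (D.mulVec x) +
      ∑ j, (α j : ℂ) * dotProduct (star x) ((A j).mulVec x) *
        dotProduct (star x) ((B j)ᴴ.mulVec x))
    (hpsd : ((μ₂ : ℂ) • (1 : Matrix (Fin M) (Fin M) ℂ) + (α₀ : ℂ) • D).PosSemidef)
    (hineq : ∀ y z : Fin M → ℂ,
      (∑ i, ‖y i‖ ^ 2 = 1) → (∑ i, ‖z i‖ ^ 2 = 1) →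
      0 ≤ μ₁ * (2 * (∑ i, ‖y i‖ ^ 2) * (∑ i, ‖z i‖ ^ 2) +
            (2 * (dotProduct (star y) z).re) ^ 2) +
          ∑ j, α j * (crossForm M y z (A j) (B j)).re) :
    ConvexOn ℝ Set.univ ftilde :=
  stmt15_general M J μ₁ μ₂ α₀ α D A B ftilde hf hpsd hineq
end
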